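/- Let G be an abelian group and let R be a G-graded ring that is gr-prime and right gr-Goldie. Suppose a ∈ R is a non-nilpotent homogeneous element such that the right ideal aR is gr-uniform. Then r-ann(a) = r-ann(a^2). -/

import Mathlib

/-- The right annihilator of an element, as an additive subgroup. -/
def rAnn {R : Type*} [Ring R] (a : R) : AddSubgroup R where
  carrier := {r : R | a * r = 0}
  zero_mem' := mul_zero a
  add_mem' := by intro x y hx hy; simp only [Set.mem_setOf_eq, mul_add] at *; rw [hx, hy, add_zero]
  neg_mem' := by intro x hx; simp only [Set.mem_setOf_eq, mul_neg] at *; rw [hx, neg_zero]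

/-- The right ideal `aR` generated by `a` (in a unital ring), as an additive subgroup. -/
def mulLeftRange {R : Type*} [Ring R] (a : R) : AddSubgroup R where
  carrier := Set.range (fun r : R => a * r)
  zero_mem' := ⟨0, mul_zero a⟩
  add_mem' := by rintro x y ⟨r, rfl⟩ ⟨s, rfl⟩; exact ⟨r + s, by simp [mul_add]⟩
  neg_mem' := by rintro x ⟨r, rfl⟩; exact ⟨-r, by simp [mul_neg]⟩

/-- A graded right ideal: an additive subgroup closed under right multiplication that
contains all homogeneous components of its elements. -/
def IsGradedRightIdeal {G R : Type*} [AddCommGroup G] [DecidableEq G] [Ring R]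
    (𝒜 : G → AddSubgroup R) [GradedRing 𝒜] (I : AddSubgroup R) : Prop :=
  (∀ a ∈ I, ∀ r : R, a * r ∈ I) ∧
  (∀ a ∈ I, ∀ g : G, (DirectSum.decompose 𝒜 a g : R) ∈ I)

/-- `R` is gr-prime: for homogeneous `a, b`, `aRb = 0` implies `a = 0` or `b = 0`. -/
def GrPrime {G R : Type*} [AddCommGroup G] [DecidableEq G] [Ring R]
    (𝒜 : G → AddSubgroup R) [GradedRing 𝒜] : Prop :=
  ∀ a b : R, SetLike.IsHomogeneousElem 𝒜 a → SetLike.IsHomogeneousElem 𝒜 b →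
    (∀ r : R, a * r * b = 0) → a = 0 ∨ b = 0

/-- `R` is right gr-Goldie: ACC on right annihilators of homogeneous elements, and no
infinite direct sum of nonzero graded right ideals. -/
def GrGoldie {G R : Type*} [AddCommGroup G] [DecidableEq G] [Ring R]
    (𝒜 : G → AddSubgroup R) [GradedRing 𝒜] : Prop :=
  (∀ f : ℕ → R, (∀ n, SetLike.IsHomogeneousElem 𝒜 (f n)) →
      ¬ StrictMono fun n => rAnn (f n)) ∧
  ¬ ∃ I : ℕ → AddSubgroup R, (∀ n, IsGradedRightIdeal 𝒜 (I n)) ∧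
      (∀ n, I n ≠ ⊥) ∧ iSupIndep I

/-- A graded right ideal `I` is gr-essential if it meets every nonzero graded right
ideal nontrivially. -/
def GrEssential {G R : Type*} [AddCommGroup G] [DecidableEq G] [Ring R]
    (𝒜 : G → AddSubgroup R) [GradedRing 𝒜] (I : AddSubgroup R) : Prop :=
  IsGradedRightIdeal 𝒜 I ∧
  ∀ K : AddSubgroup R, IsGradedRightIdeal 𝒜 K → K ≠ ⊥ → I ⊓ K ≠ ⊥

/-- A graded right ideal `M` is gr-uniform if it is nonzero and any two nonzero graded
right ideals contained in `M` intersect nontrivially. -/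
def GrUniform {G R : Type*} [AddCommGroup G] [DecidableEq G] [Ring R]
    (𝒜 : G → AddSubgroup R) [GradedRing 𝒜] (M : AddSubgroup R) : Prop :=
  M ≠ ⊥ ∧
  ∀ K L : AddSubgroup R, IsGradedRightIdeal 𝒜 K → IsGradedRightIdeal 𝒜 L →
    K ≤ M → L ≤ M → K ≠ ⊥ → L ≠ ⊥ → K ⊓ L ≠ ⊥

section Aux
variable {G R : Type*} [AddCommGroup G] [DecidableEq G] [Ring R]
    (𝒜 : G → AddSubgroup R) [GradedRing 𝒜]

lemma decompose_mul_homog {a b : R} {i g : G} (ha : a ∈ 𝒜 i) :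
    (DirectSum.decompose 𝒜 (a * b) g : R) = a * DirectSum.decompose 𝒜 b (-i + g) := by
  have := DirectSum.coe_decompose_mul_add_of_left_mem 𝒜 (b := b) (j := -i + g) ha
  rwa [add_neg_cancel_left] at this

lemma rAnn_graded {a : R} (ha : SetLike.IsHomogeneousElem 𝒜 a) :
    IsGradedRightIdeal 𝒜 (rAnn a) := by
  obtain ⟨i, hai⟩ := ha
  constructor
  · intro x hx r
    show a * (x * r) = 0
    rw [← mul_assoc, hx, zero_mul]
  · intro x hx g
    show a * (DirectSum.decompose 𝒜 x g : R) = 0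
    have h1 : (DirectSum.decompose 𝒜 (a * x) (i + g) : R) = a * DirectSum.decompose 𝒜 x g :=
      DirectSum.coe_decompose_mul_add_of_left_mem 𝒜 hai
    rw [← h1, hx]
    simp

lemma mulLeftRange_graded {a : R} (ha : SetLike.IsHomogeneousElem 𝒜 a) :
    IsGradedRightIdeal 𝒜 (mulLeftRange a) := by
  obtain ⟨i, hai⟩ := ha
  constructor
  · rintro x ⟨r, rfl⟩ s
    exact ⟨r * s, (mul_assoc a r s).symm⟩
  · rintro x ⟨r, rfl⟩ g
    exact ⟨DirectSum.decompose 𝒜 r (-i + g), (decompose_mul_homog 𝒜 hai).symm⟩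

end Aux

/-- If `a` is a non-nilpotent homogeneous element of a gr-prime, right gr-Goldie ring
such that `aR` is gr-uniform, then `r-ann(a) = r-ann(a²)`. -/

theorem rAnn_sq_eq_of_grUniform
    {G R : Type*} [AddCommGroup G] [DecidableEq G] [Ring R]
    (𝒜 : G → AddSubgroup R) [GradedRing 𝒜]
    (hprime : GrPrime 𝒜) (hgoldie : GrGoldie 𝒜)
    (a : R) (ha : SetLike.IsHomogeneousElem 𝒜 a) (hnn : ∀ n : ℕ, 1 ≤ n → a ^ n ≠ 0)
    (hu : GrUniform 𝒜 (mulLeftRange a)) :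
    rAnn a = rAnn (a ^ 2) := by
  have ha1 : a ≠ 0 := by simpa using hnn 1 le_rfl
  have hpow : ∀ n : ℕ, SetLike.IsHomogeneousElem 𝒜 (a ^ (n + 1)) := by
    intro n
    induction n with
    | zero => simpa using ha
    | succ m ih => rw [pow_succ]; exact SetLike.IsHomogeneousElem.mul ih ha
  -- a stabilization index for annihilators of powers
  have hmono : ∀ n : ℕ, rAnn (a ^ (n + 1)) ≤ rAnn (a ^ (n + 2)) := by
    intro n x hx
    show a ^ (n + 2) * x = 0
    have : a ^ (n + 2) = a * a ^ (n + 1) := pow_succ' a (n + 1)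
    rw [this, mul_assoc, hx, mul_zero]
  obtain ⟨m, hm⟩ : ∃ m : ℕ, rAnn (a ^ (m + 1)) = rAnn (a ^ (m + 2)) := by
    by_contra h
    push_neg at h
    exact hgoldie.1 (fun n => a ^ (n + 1)) hpow
      (strictMono_nat_of_lt_succ fun n => lt_of_le_of_ne (hmono n) (h n))
  set k := m + 1 with hk
  have hkey : ∀ r : R, a ^ (k + 1) * r = 0 → a ^ k * r = 0 := by
    intro r hr
    have : r ∈ rAnn (a ^ (m + 2)) := hr
    rw [← hm] at this
    exact this
  -- the graded right ideal L = aR ⊓ rAnn a is zero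
  have hL : mulLeftRange a ⊓ rAnn a = ⊥ := by
    by_contra hLne
    have hKgr : IsGradedRightIdeal 𝒜 (mulLeftRange (a ^ k)) :=
      mulLeftRange_graded 𝒜 (hpow m)
    have hLgr : IsGradedRightIdeal 𝒜 (mulLeftRange a ⊓ rAnn a) := by
      have h1 := mulLeftRange_graded 𝒜 ha
      have h2 := rAnn_graded 𝒜 ha
      exact ⟨fun x hx r => ⟨h1.1 x hx.1 r, h2.1 x hx.2 r⟩,
        fun x hx g => ⟨h1.2 x hx.1 g, h2.2 x hx.2 g⟩⟩
    have hKle : mulLeftRange (a ^ k) ≤ mulLeftRange a := by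
      rintro x ⟨r, rfl⟩
      exact ⟨a ^ m * r, by show a * (a ^ m * r) = a ^ k * r; rw [← mul_assoc, ← pow_succ']⟩
    have hKne : mulLeftRange (a ^ k) ≠ ⊥ := by
      intro hbot
      have : a ^ k ∈ mulLeftRange (a ^ k) := ⟨1, mul_one _⟩
      rw [hbot] at this
      exact hnn k (Nat.le_add_left 1 m) (by simpa using this)
    have := hu.2 (mulLeftRange (a ^ k)) (mulLeftRange a ⊓ rAnn a) hKgr hLgr hKle
      inf_le_left hKne hLne
    apply this
    rw [eq_bot_iff]
    rintro x ⟨⟨r, rfl⟩, -, hx2⟩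
    have hx2' : a * (a ^ k * r) = 0 := hx2
    have : a ^ (k + 1) * r = 0 := by rw [pow_succ', mul_assoc]; exact hx2'
    simpa using hkey r this
  -- conclude
  ext x
  constructor
  · intro hx
    show a ^ 2 * x = 0
    have hx' : a * x = 0 := hx
    rw [pow_two, mul_assoc, hx', mul_zero]
  · intro hx
    show a * x = 0
    have hx' : a ^ 2 * x = 0 := hx
    have hmem : a * x ∈ mulLeftRange a ⊓ rAnn a := by
      refine ⟨⟨x, rfl⟩, ?_⟩
      show a * (a * x) = 0
      rw [← mul_assoc, ← pow_two]
      exact hx'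
    rw [hL] at hmem
    simpa using hmem
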